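/- Let U ⊆ ℂ × ℂ be open, let G : U → Matrix (Fin p) (Fin p) ℂ be analytic on U, and let z, w ∈ ℂ be such that (z, conj w) ∈ U. Then there exists M₀ > 0 such that for every real M with 0 < M < M₀ there is C ≥ 0 such that for all u, v ∈ ℓ²(ℕ, ℂᵖ) the family (n,m) ↦ (u_n)^* 𝒦_{n,m}(z,w) M^{n+m} v_m is absolutely summable with |∑_{n,m≥0} (u_n)^* 𝒦_{n,m}(z,w) M^{n+m} v_m| ≤ C·‖u‖_{ℓ²}·‖v‖_{ℓ²}; i.e. the scaled block matrix (𝒦_{n,m}(z,w) M^{n+m}) defines a bounded operator on ℓ²(ℕ, ℂᵖ). -/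

import Mathlib

open scoped ComplexConjugate InnerProductSpace

attribute [local instance] Matrix.normedAddCommGroup Matrix.normedSpace

/-- `𝒦_{n,m}(z,w) := (1/(n!·m!)) ∂₁ⁿ∂₂ᵐ G(z, conj w)`: the normalized iterated partial
derivative of `G`, `m` times in the second variable at `conj w`, then `n` times in the first
variable at `z`.  This encodes the kernel `K(z,w) = G(z, conj w)`, analytic in `z` and `w̄`. -/
noncomputable def kernelCoeff {p : ℕ} (G : ℂ × ℂ → Matrix (Fin p) (Fin p) ℂ)
    (n m : ℕ) (z w : ℂ) : Matrix (Fin p) (Fin p) ℂ :=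
  ((n.factorial * m.factorial : ℂ)⁻¹) •
    iteratedDeriv n (fun z' => iteratedDeriv m (fun ζ => G (z', ζ)) (conj w)) z

/-!
Cauchy's estimate, applied first in the second and then in the first variable on a closed
polydisc of radius `r` around `(z, conj w)` inside `U` on which `‖G‖ ≤ B`, gives
`‖𝒦_{n,m}(z,w)‖ ≤ B / r^(n+m)`.
For `0 < M < r` the entries of the bilinear form are then dominated by `‖u‖ ‖v‖` times the
geometric double series in `M / r`. The outer estimate needs `z' ↦ ∂₂ᵐ G(z', conj w)` to be
holomorphic: by induction on `m`, `∂₂ᵐ⁺¹ G(x) = D(∂₂ᵐ G)(x) (0, 1)` on `U`, and `fderiv`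
preserves analyticity.
-/

open Metric

theorem AnalyticOnNhd.iteratedDeriv_snd {E F : Type*} [NormedAddCommGroup E] [NormedSpace ℂ E]
    [NormedAddCommGroup F] [NormedSpace ℂ F] [CompleteSpace F] {G : E × ℂ → F} {U : Set (E × ℂ)}
    (hU : IsOpen U) (hG : AnalyticOnNhd ℂ G U) (m : ℕ) :
    AnalyticOnNhd ℂ (fun x : E × ℂ => iteratedDeriv m (fun ζ => G (x.1, ζ)) x.2) U := by
  induction m with
  | zero => simpa using hG
  | succ m ih =>
    refine ((ContinuousLinearMap.apply ℂ F ((0 : E), (1 : ℂ))).comp_analyticOnNhd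
      ih.fderiv).congr hU fun x hx => ?_
    have hchain := (ih x hx).differentiableAt.hasFDerivAt.comp_hasDerivAt x.2
      ((hasDerivAt_const x.2 x.1).prodMk (hasDerivAt_id x.2))
    rw [iteratedDeriv_succ]
    exact hchain.deriv.symm

theorem norm_iteratedDeriv_iteratedDeriv_le {F : Type*} [NormedAddCommGroup F]
    [NormedSpace ℂ F] [CompleteSpace F] {G : ℂ × ℂ → F} {U : Set (ℂ × ℂ)} (hU : IsOpen U)
    (hG : AnalyticOnNhd ℂ G U) {a b : ℂ} {r B : ℝ} (hr : 0 < r)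
    (hsub : closedBall a r ×ˢ closedBall b r ⊆ U)
    (hB : ∀ x ∈ closedBall a r ×ˢ closedBall b r, ‖G x‖ ≤ B) (n m : ℕ) :
    ‖iteratedDeriv n (fun z => iteratedDeriv m (fun ζ => G (z, ζ)) b) a‖
      ≤ n.factorial * m.factorial * B / r ^ (n + m) := by
  have hinner : ∀ z ∈ closedBall a r,
      ‖iteratedDeriv m (fun ζ => G (z, ζ)) b‖ ≤ m.factorial * B / r ^ m := by
    intro z hz
    refine Complex.norm_iteratedDeriv_le_of_forall_mem_sphere_norm_le m hr ?_
      fun ζ hζ => hB _ ⟨hz, sphere_subset_closedBall hζ⟩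
    refine DifferentiableOn.diffContOnCl_ball (fun ζ hζ => ?_) subset_rfl
    exact ((hG _ (hsub ⟨hz, hζ⟩)).comp_of_eq (analyticAt_const.prod analyticAt_id)
      rfl).differentiableAt.differentiableWithinAt
  refine (Complex.norm_iteratedDeriv_le_of_forall_mem_sphere_norm_le n hr ?_
    fun z hz => hinner z (sphere_subset_closedBall hz)).trans_eq ?_
  · refine DifferentiableOn.diffContOnCl_ball (fun z hz => ?_) subset_rfl
    exact ((hG.iteratedDeriv_snd hU m _ (hsub ⟨hz, mem_closedBall_self hr.le⟩)).comp_of_eq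
      (analyticAt_id.prod analyticAt_const) rfl).differentiableAt.differentiableWithinAt
  · rw [pow_add]
    field_simp

theorem norm_kernelCoeff_le {p : ℕ} {G : ℂ × ℂ → Matrix (Fin p) (Fin p) ℂ} {U : Set (ℂ × ℂ)}
    (hU : IsOpen U) (hG : AnalyticOnNhd ℂ G U) {z w : ℂ} {r B : ℝ} (hr : 0 < r)
    (hsub : closedBall z r ×ˢ closedBall (conj w) r ⊆ U)
    (hB : ∀ x ∈ closedBall z r ×ˢ closedBall (conj w) r, ‖G x‖ ≤ B) (n m : ℕ) :
    ‖kernelCoeff G n m z w‖ ≤ B / r ^ (n + m) := by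
  have hfac : (0 : ℝ) < n.factorial * m.factorial := by positivity
  rw [kernelCoeff, norm_smul, norm_inv, ← Nat.cast_mul, Complex.norm_natCast, Nat.cast_mul,
    inv_mul_le_iff₀ hfac]
  exact (norm_iteratedDeriv_iteratedDeriv_le hU hG hr hsub hB n m).trans_eq (by ring)

theorem Matrix.exists_norm_toEuclideanLin_apply_le (𝕜 ι : Type*) [RCLike 𝕜] [Fintype ι]
    [DecidableEq ι] :
    ∃ C : ℝ, 0 ≤ C ∧ ∀ (K : Matrix ι ι 𝕜) (y : EuclideanSpace 𝕜 ι),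
      ‖Matrix.toEuclideanLin K y‖ ≤ C * ‖K‖ * ‖y‖ := by
  let Φ := (Matrix.toEuclideanCLM (n := ι) (𝕜 := 𝕜)).toAlgEquiv.toLinearMap
  obtain ⟨C, hC, hΦ⟩ := SemilinearMapClass.bound_of_continuous Φ
    (LinearMap.continuous_of_finiteDimensional Φ)
  refine ⟨C, hC.le, fun K y => ?_⟩
  calc ‖Matrix.toEuclideanLin K y‖ = ‖Φ K y‖ := rfl
    _ ≤ ‖Φ K‖ * ‖y‖ := (Φ K).le_opNorm y
    _ ≤ C * ‖K‖ * ‖y‖ := by gcongr; exact hΦ K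

theorem summable_norm_and_norm_tsum_le_of_norm_le_geometric {E : Type*}
    [SeminormedAddCommGroup E] {f : ℕ × ℕ → E} {c a : ℝ} (ha₀ : 0 ≤ a) (ha₁ : a < 1)
    (hf : ∀ n m, ‖f (n, m)‖ ≤ c * a ^ (n + m)) :
    Summable (fun nm => ‖f nm‖) ∧ ‖∑' nm, f nm‖ ≤ c * ((1 - a)⁻¹) ^ 2 := by
  have hgeom := summable_geometric_of_lt_one ha₀ ha₁
  have hprod : Summable fun nm : ℕ × ℕ => a ^ nm.1 * a ^ nm.2 :=
    hgeom.mul_of_nonneg hgeom (fun n => pow_nonneg ha₀ n) (fun n => pow_nonneg ha₀ n)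
  have hf' : ∀ nm : ℕ × ℕ, ‖f nm‖ ≤ c * (a ^ nm.1 * a ^ nm.2) := fun ⟨n, m⟩ => by
    rw [← pow_add]; exact hf n m
  have hsum := (hprod.mul_left c).of_nonneg_of_le (fun _ => norm_nonneg _) hf'
  refine ⟨hsum, ?_⟩
  calc ‖∑' nm, f nm‖ ≤ ∑' nm, ‖f nm‖ := norm_tsum_le_tsum_norm hsum
    _ ≤ ∑' nm : ℕ × ℕ, c * (a ^ nm.1 * a ^ nm.2) := hsum.tsum_le_tsum hf' (hprod.mul_left c)
    _ = c * ((1 - a)⁻¹) ^ 2 := by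
      rw [tsum_mul_left, ← hgeom.tsum_mul_tsum hgeom hprod, tsum_geometric_of_lt_one ha₀ ha₁, sq]

theorem exists_bound_inner_scaled_block_of_norm_le {𝕜 ι : Type*} [RCLike 𝕜] [Fintype ι]
    [DecidableEq ι] {K : ℕ → ℕ → Matrix ι ι 𝕜} {B r M : ℝ}
    (hK : ∀ n m, ‖K n m‖ ≤ B / r ^ (n + m)) (hM : 0 ≤ M) (hMr : M < r) :
    ∃ C : ℝ, 0 ≤ C ∧ ∀ u v : lp (fun _ : ℕ => EuclideanSpace 𝕜 ι) 2,
      Summable (fun nm : ℕ × ℕ =>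
        ‖⟪(u nm.1 : EuclideanSpace 𝕜 ι),
          (M : 𝕜) ^ (nm.1 + nm.2) • Matrix.toEuclideanLin (K nm.1 nm.2) (v nm.2)⟫_𝕜‖) ∧
      ‖∑' nm : ℕ × ℕ, ⟪(u nm.1 : EuclideanSpace 𝕜 ι),
          (M : 𝕜) ^ (nm.1 + nm.2) • Matrix.toEuclideanLin (K nm.1 nm.2) (v nm.2)⟫_𝕜‖
        ≤ C * ‖u‖ * ‖v‖ := by
  obtain ⟨C₀, hC₀, hT⟩ := Matrix.exists_norm_toEuclideanLin_apply_le 𝕜 ι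
  have hr : 0 < r := hM.trans_lt hMr
  have hB : 0 ≤ B := by simpa using (norm_nonneg _).trans (hK 0 0)
  set a := M / r
  have ha₀ : 0 ≤ a := div_nonneg hM hr.le
  have ha₁ : a < 1 := (div_lt_one hr).2 hMr
  refine ⟨C₀ * B * ((1 - a)⁻¹) ^ 2, by have := sub_pos.2 ha₁; positivity, fun u v => ?_⟩
  have hterm : ∀ n m, ‖⟪(u n : EuclideanSpace 𝕜 ι),
      (M : 𝕜) ^ (n + m) • Matrix.toEuclideanLin (K n m) (v m)⟫_𝕜‖
        ≤ C₀ * B * ‖u‖ * ‖v‖ * a ^ (n + m) := fun n m =>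
    calc _ ≤ M ^ (n + m) * (‖(u n : EuclideanSpace 𝕜 ι)‖ * (C₀ * ‖K n m‖ * ‖v m‖)) := by
          rw [inner_smul_right, norm_mul, norm_pow, RCLike.norm_ofReal, abs_of_nonneg hM]
          gcongr
          exact (norm_inner_le_norm _ _).trans (by gcongr; exact hT _ _)
      _ ≤ M ^ (n + m) * (‖u‖ * (C₀ * (B / r ^ (n + m)) * ‖v‖)) := by
          gcongr
          · exact lp.norm_apply_le_norm two_ne_zero u n
          · exact hK n m
          · exact lp.norm_apply_le_norm two_ne_zero v m
      _ = C₀ * B * ‖u‖ * ‖v‖ * a ^ (n + m) := by rw [div_pow]; field_simp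
  obtain ⟨hsum, hle⟩ := summable_norm_and_norm_tsum_le_of_norm_le_geometric ha₀ ha₁
    (f := fun nm : ℕ × ℕ => ⟪(u nm.1 : EuclideanSpace 𝕜 ι),
      (M : 𝕜) ^ (nm.1 + nm.2) • Matrix.toEuclideanLin (K nm.1 nm.2) (v nm.2)⟫_𝕜) hterm
  exact ⟨hsum, hle.trans_eq (by ring)⟩

theorem kernelCoeff_scaled_block_bounded_general
    {p : ℕ} (U : Set (ℂ × ℂ)) (hU : IsOpen U)
    (G : ℂ × ℂ → Matrix (Fin p) (Fin p) ℂ) (hG : AnalyticOnNhd ℂ G U)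
    (z w : ℂ) (hzw : (z, conj w) ∈ U) :
    ∃ M₀ : ℝ, 0 < M₀ ∧ ∀ M : ℝ, 0 < M → M < M₀ →
      ∃ C : ℝ, 0 ≤ C ∧
        ∀ u v : lp (fun _ : ℕ => EuclideanSpace ℂ (Fin p)) 2,
          Summable (fun nm : ℕ × ℕ =>
            ‖⟪(u nm.1 : EuclideanSpace ℂ (Fin p)),
                (M : ℂ) ^ (nm.1 + nm.2) •
                  Matrix.toEuclideanLin (kernelCoeff G nm.1 nm.2 z w) (v nm.2)⟫_ℂ‖) ∧
          ‖∑' nm : ℕ × ℕ,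
              ⟪(u nm.1 : EuclideanSpace ℂ (Fin p)),
                (M : ℂ) ^ (nm.1 + nm.2) •
                  Matrix.toEuclideanLin (kernelCoeff G nm.1 nm.2 z w) (v nm.2)⟫_ℂ‖
            ≤ C * ‖u‖ * ‖v‖ := by
  obtain ⟨r, hr, hsub⟩ : ∃ r > 0, closedBall z r ×ˢ closedBall (conj w) r ⊆ U := by
    obtain ⟨r, hr, hball⟩ := nhds_basis_closedBall.mem_iff.1 (hU.mem_nhds hzw)
    exact ⟨r, hr, by rwa [closedBall_prod_same]⟩
  obtain ⟨B, hB⟩ := ((isCompact_closedBall z r).prod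
    (isCompact_closedBall (conj w) r)).exists_bound_of_continuousOn (hG.continuousOn.mono hsub)
  -- elaborating this against the goal instead of on its own times out
  exact ⟨r, hr, fun M hM hMr => (exists_bound_inner_scaled_block_of_norm_le
    (norm_kernelCoeff_le hU hG hr hsub hB) hM.le hMr :)⟩

/-- For a kernel analytic on an open set `U ⊆ ℂ × ℂ` with `(z, conj w) ∈ U`,
there is `M₀ > 0` such that for every `0 < M < M₀` the scaled semi-infinite block matrix
`(𝒦_{n,m}(z,w) M^{n+m})` defines a bounded operator on `ℓ²(ℕ, ℂᵖ)`. -/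
theorem kernelCoeff_scaled_block_bounded
    {p : ℕ} (hp : 1 ≤ p) (U : Set (ℂ × ℂ)) (hU : IsOpen U)
    (G : ℂ × ℂ → Matrix (Fin p) (Fin p) ℂ) (hG : AnalyticOnNhd ℂ G U)
    (z w : ℂ) (hzw : (z, conj w) ∈ U) :
    ∃ M₀ : ℝ, 0 < M₀ ∧ ∀ M : ℝ, 0 < M → M < M₀ →
      ∃ C : ℝ, 0 ≤ C ∧
        ∀ u v : lp (fun _ : ℕ => EuclideanSpace ℂ (Fin p)) 2,
          Summable (fun nm : ℕ × ℕ =>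
            ‖⟪(u nm.1 : EuclideanSpace ℂ (Fin p)),
                (M : ℂ) ^ (nm.1 + nm.2) •
                  Matrix.toEuclideanLin (kernelCoeff G nm.1 nm.2 z w) (v nm.2)⟫_ℂ‖) ∧
          ‖∑' nm : ℕ × ℕ,
              ⟪(u nm.1 : EuclideanSpace ℂ (Fin p)),
                (M : ℂ) ^ (nm.1 + nm.2) •
                  Matrix.toEuclideanLin (kernelCoeff G nm.1 nm.2 z w) (v nm.2)⟫_ℂ‖
            ≤ C * ‖u‖ * ‖v‖ :=
  kernelCoeff_scaled_block_bounded_general U hU G hG z w hzw
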